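/- arXiv:1401.4853 — 5 statements merged into one kernel-verified Lean document; each statement's English description precedes it below -/
import Mathlib

section
/- For any real number z tending to infinity and fixed reals a, b, the ratio Γ(z+a)/Γ(z+b) is asymptotically equivalent to z^{a-b}, i.e. lim_{z→∞} Γ(z+a)/(Γ(z+b)·z^{a-b}) = 1. -/
/-!
Log-convexity of `Γ` gives Wendel's inequalities
`(x / (x + c)) ^ (1 - c) ≤ Γ(x + c) / (Γ(x) x ^ c) ≤ 1` for `0 ≤ c ≤ 1`, so this ratio tends
to `1`. The functional equation `Γ(x + 1) = x Γ(x)` changes the ratio by the factor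
`(x + c) / x → 1` when `c` is shifted by `1`, which extends the limit to every real `c`.
The theorem is the quotient of the cases `c = a` and `c = b`.
-/

open Real Filter Topology

namespace Real

theorem Gamma_mul_add_one_sub_mul_le {s t a : ℝ} (hs : 0 < s) (ht : 0 < t) (ha₀ : 0 ≤ a)
    (ha₁ : a ≤ 1) : Gamma (a * s + (1 - a) * t) ≤ Gamma s ^ a * Gamma t ^ (1 - a) := by
  rcases ha₀.eq_or_lt with rfl | ha₀
  · simp
  rcases ha₁.eq_or_lt with rfl | ha₁
  · simp
  exact Gamma_mul_add_mul_le_rpow_Gamma_mul_rpow_Gamma hs ht ha₀ (by linarith) (by ring)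

theorem Gamma_add_le_rpow_mul_Gamma {x c : ℝ} (hx : 0 < x) (hc₀ : 0 ≤ c) (hc₁ : c ≤ 1) :
    Gamma (x + c) ≤ x ^ c * Gamma x := by
  have hΓ := Gamma_pos_of_pos hx
  calc Gamma (x + c) = Gamma (c * (x + 1) + (1 - c) * x) := by ring_nf
    _ ≤ Gamma (x + 1) ^ c * Gamma x ^ (1 - c) :=
      Gamma_mul_add_one_sub_mul_le (by linarith) hx hc₀ hc₁
    _ = x ^ c * (Gamma x ^ c * Gamma x ^ (1 - c)) := by
      rw [Gamma_add_one hx.ne', mul_rpow hx.le hΓ.le, mul_assoc]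
    _ = x ^ c * Gamma x := by rw [← rpow_add hΓ, add_sub_cancel, rpow_one]

theorem mul_Gamma_le_rpow_mul_Gamma_add {x c : ℝ} (hx : 0 < x) (hc₀ : 0 ≤ c) (hc₁ : c ≤ 1) :
    x * Gamma x ≤ (x + c) ^ (1 - c) * Gamma (x + c) := by
  have h := Gamma_add_le_rpow_mul_Gamma (x := x + c) (c := 1 - c) (by linarith) (by linarith)
    (by linarith)
  rwa [add_add_sub_cancel, Gamma_add_one hx.ne'] at h

theorem tendsto_add_const_div_self (c : ℝ) :
    Tendsto (fun x : ℝ => (x + c) / x) atTop (𝓝 1) := by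
  have h : Tendsto (fun x : ℝ => 1 + c * x⁻¹) atTop (𝓝 (1 + c * 0)) :=
    tendsto_const_nhds.add (tendsto_inv_atTop_zero.const_mul c)
  rw [mul_zero, add_zero] at h
  refine h.congr' ?_
  filter_upwards [eventually_ne_atTop 0] with x hx
  field_simp

theorem tendsto_Gamma_add_div_Gamma_mul_rpow_of_mem_Icc {c : ℝ} (hc₀ : 0 ≤ c) (hc₁ : c ≤ 1) :
    Tendsto (fun x : ℝ => Gamma (x + c) / (Gamma x * x ^ c)) atTop (𝓝 1) := by
  have hlow : Tendsto (fun x : ℝ => ((x + c) / x)⁻¹ ^ (1 - c)) atTop (𝓝 1) := by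
    simpa using ((tendsto_add_const_div_self c).inv₀ one_ne_zero).rpow_const
      (Or.inl (by norm_num))
  refine tendsto_of_tendsto_of_tendsto_of_le_of_le' hlow tendsto_const_nhds ?_ ?_
  · filter_upwards [eventually_gt_atTop 0] with x hx
    have hxc : 0 < x + c := by linarith
    rw [inv_div, div_rpow hx.le hxc.le, div_le_div_iff₀ (by positivity) (by positivity)]
    calc x ^ (1 - c) * (Gamma x * x ^ c) = x * Gamma x := by
          rw [mul_left_comm, ← rpow_add hx, sub_add_cancel, rpow_one, mul_comm]
      _ ≤ (x + c) ^ (1 - c) * Gamma (x + c) := mul_Gamma_le_rpow_mul_Gamma_add hx hc₀ hc₁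
      _ = Gamma (x + c) * (x + c) ^ (1 - c) := mul_comm _ _
  · filter_upwards [eventually_gt_atTop 0] with x hx
    rw [div_le_one (by positivity), mul_comm]
    exact Gamma_add_le_rpow_mul_Gamma hx hc₀ hc₁

theorem Gamma_add_add_one_div_Gamma_mul_rpow {x c : ℝ} (hx : x ≠ 0) (hxc : x + c ≠ 0) :
    Gamma (x + (c + 1)) / (Gamma x * x ^ (c + 1)) =
      Gamma (x + c) / (Gamma x * x ^ c) * ((x + c) / x) := by
  rw [← add_assoc, Gamma_add_one hxc, rpow_add_one hx]
  ring

theorem tendsto_Gamma_add_add_one_div_Gamma_mul_rpow_iff (c : ℝ) :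
    Tendsto (fun x : ℝ => Gamma (x + (c + 1)) / (Gamma x * x ^ (c + 1))) atTop (𝓝 1) ↔
      Tendsto (fun x : ℝ => Gamma (x + c) / (Gamma x * x ^ c)) atTop (𝓝 1) := by
  have hshift : ∀ᶠ x : ℝ in atTop, Gamma (x + (c + 1)) / (Gamma x * x ^ (c + 1)) =
      Gamma (x + c) / (Gamma x * x ^ c) * ((x + c) / x) := by
    filter_upwards [eventually_gt_atTop 0, eventually_gt_atTop (-c)] with x hx hxc
    exact Gamma_add_add_one_div_Gamma_mul_rpow hx.ne' (by linarith)
  have hfactor := tendsto_add_const_div_self c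
  constructor
  · intro h
    have hdiv := h.div hfactor one_ne_zero
    rw [div_one] at hdiv
    refine hdiv.congr' ?_
    filter_upwards [hshift, eventually_gt_atTop 0, eventually_gt_atTop (-c)] with x hx hx₀ hxc
    rw [Pi.div_apply, hx, mul_div_cancel_right₀ _ (div_pos (by linarith) hx₀).ne']
  · intro h
    have hmul := h.mul hfactor
    rw [mul_one] at hmul
    exact hmul.congr' (hshift.mono fun x hx => hx.symm)

theorem tendsto_Gamma_add_int_div_Gamma_mul_rpow_iff (c : ℝ) (m : ℤ) :
    Tendsto (fun x : ℝ => Gamma (x + (c + m)) / (Gamma x * x ^ (c + m))) atTop (𝓝 1) ↔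
      Tendsto (fun x : ℝ => Gamma (x + c) / (Gamma x * x ^ c)) atTop (𝓝 1) := by
  induction m using Int.induction_on with
  | zero => simp
  | succ n ih =>
    have hc : c + ((n + 1 : ℤ) : ℝ) = c + (n : ℤ) + 1 := by push_cast; ring
    rw [hc, tendsto_Gamma_add_add_one_div_Gamma_mul_rpow_iff, ih]
  | pred n ih =>
    have hc : c + ((-n : ℤ) : ℝ) = c + ((-n - 1 : ℤ) : ℝ) + 1 := by push_cast; ring
    rw [← ih, hc, tendsto_Gamma_add_add_one_div_Gamma_mul_rpow_iff]

theorem tendsto_Gamma_add_div_Gamma_mul_rpow (c : ℝ) :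
    Tendsto (fun x : ℝ => Gamma (x + c) / (Gamma x * x ^ c)) atTop (𝓝 1) := by
  have h := (tendsto_Gamma_add_int_div_Gamma_mul_rpow_iff (Int.fract c) ⌊c⌋).2
    (tendsto_Gamma_add_div_Gamma_mul_rpow_of_mem_Icc (Int.fract_nonneg c)
      (Int.fract_lt_one c).le)
  rwa [Int.fract_add_floor] at h

end Real

theorem gamma_ratio_asymptotic (a b : ℝ) :
    Tendsto (fun z : ℝ => Real.Gamma (z + a) / (Real.Gamma (z + b) * z ^ (a - b)))
      atTop (nhds 1) := by
  have h := (tendsto_Gamma_add_div_Gamma_mul_rpow a).div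
    (tendsto_Gamma_add_div_Gamma_mul_rpow b) one_ne_zero
  rw [div_one] at h
  refine h.congr' ?_
  filter_upwards [eventually_gt_atTop 0] with z hz
  rw [Pi.div_apply, rpow_sub hz]
  field_simp
end

section
/- Let g : [0,∞) → [0,1] be a nondecreasing function, c-times continuously differentiable near 0, with g(0) = 0, all derivatives of order < c vanishing at 0, g^{(l)} bounded for every l ≤ c, and lim_{t→∞} g(t) = 1. Define f(ε) = (|S^{N-1}|/(2π)^{N/2}) ∫_0^∞ g(ε/r) r^{N-1} e^{-r²/2} dr for 0 < c < N. Then lim_{ε→0} f(ε)/ε^c = (2^{-c/2} Γ((N-c)/2) / Γ(N/2)) · lim_{ε→0} g(ε)/ε^c, provided the latter limit exists and is finite. -/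
/-!
Writing `φ t = g t / t ^ c`, the quotient `f ε / ε ^ c` equals the normalising constant times
`∫₀^∞ φ (ε / r) r ^ (N - 1 - c) e^{-r²/2} dr`. Near `0` the function `φ` is bounded because it
converges to `L`, away from `0` because `g ≤ 1`; as `r ^ (N - 1 - c) e^{-r²/2}` is integrable for
`c < N`, dominated convergence lets `ε → 0` under the integral. The remaining Gaussian moment is
`2 ^ ((N - c - 2) / 2) Γ((N - c) / 2)`, which combines with `|S^{N-1}| / (2π)^{N/2}` into the
stated constant.
-/

open Real Filter MeasureTheory intervalIntegral
open Set Topology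

theorem exists_abs_div_pow_le_of_tendsto {g : ℝ → ℝ} {B L : ℝ} {c : ℕ}
    (hB : ∀ t, 0 < t → |g t| ≤ B)
    (hlim : Tendsto (fun t => g t / t ^ c) (𝓝[>] 0) (𝓝 L)) :
    ∃ M, ∀ t, 0 < t → |g t / t ^ c| ≤ M := by
  obtain ⟨δ, hδ, hnear⟩ := Metric.eventually_nhds_iff.mp
    (eventually_nhdsWithin_iff.mp ((hlim.abs).eventually_le_const (lt_add_one |L|)))
  refine ⟨max (|L| + 1) (B / δ ^ c), fun t ht => ?_⟩
  rcases lt_or_ge t δ with htδ | hδt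
  · refine le_max_of_le_left (hnear ?_ ht)
    rwa [Real.dist_eq, sub_zero, abs_of_pos ht]
  · refine le_max_of_le_right ?_
    rw [abs_div, abs_of_pos (pow_pos ht c)]
    exact div_le_div₀ ((abs_nonneg _).trans (hB t ht)) (hB t ht) (pow_pos hδ c)
      (pow_le_pow_left₀ hδ.le hδt c)

theorem tendsto_setIntegral_comp_div_mul {φ v : ℝ → ℝ} {L M : ℝ}
    (hlim : Tendsto φ (𝓝[>] 0) (𝓝 L)) (hM : ∀ t, 0 < t → |φ t| ≤ M)
    (hmeas : ∀ ε, 0 < ε → AEStronglyMeasurable (fun r => φ (ε / r)) (volume.restrict (Ioi 0)))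
    (hv : IntegrableOn v (Ioi 0)) :
    Tendsto (fun ε => ∫ r in Ioi 0, φ (ε / r) * v r) (𝓝[>] 0)
      (𝓝 (L * ∫ r in Ioi 0, v r)) := by
  rw [← MeasureTheory.integral_const_mul]
  refine tendsto_integral_filter_of_dominated_convergence (fun r => M * ‖v r‖) ?_ ?_
    (hv.norm.const_mul M) ?_
  · filter_upwards [self_mem_nhdsWithin] with ε hε
    exact (hmeas ε hε).mul hv.aestronglyMeasurable
  · filter_upwards [self_mem_nhdsWithin] with ε hε
    filter_upwards [ae_restrict_mem measurableSet_Ioi] with r hr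
    rw [norm_mul]
    exact mul_le_mul_of_nonneg_right (hM _ (div_pos hε hr)) (norm_nonneg _)
  · filter_upwards [ae_restrict_mem measurableSet_Ioi] with r hr
    have hdiv : Tendsto (fun ε => ε / r) (𝓝[>] 0) (𝓝[>] 0) :=
      tendsto_nhdsWithin_of_tendsto_nhds_of_eventually_within _
        (((continuous_id.div_const r).tendsto' 0 0 (zero_div r)).mono_left nhdsWithin_le_nhds)
        (by filter_upwards [self_mem_nhdsWithin] with ε hε using div_pos hε (mem_Ioi.mp hr))
    exact (hlim.comp hdiv).mul_const (v r)

theorem MonotoneOn.aemeasurable_comp_div {g : ℝ → ℝ} (hg : MonotoneOn g (Ici 0))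
    {ε : ℝ} (hε : 0 ≤ ε) :
    AEMeasurable (fun r => g (ε / r)) (volume.restrict (Ioi 0)) :=
  (aemeasurable_restrict_of_antitoneOn measurableSet_Ioi fun _ ha _ hb hab =>
    hg (div_nonneg hε (le_of_lt hb)) (div_nonneg hε (le_of_lt ha))
      (div_le_div_of_nonneg_left hε ha hab))

theorem integral_rpow_mul_exp_neg_sq_div_two {s : ℝ} (hs : -1 < s) :
    ∫ r in Ioi (0 : ℝ), r ^ s * exp (-r ^ 2 / 2) = 2 ^ ((s - 1) / 2) * Gamma ((s + 1) / 2) := by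
  have hhalf : (1 / 2 : ℝ) ^ (-(s + 1) / 2) * (1 / 2) = 2 ^ ((s - 1) / 2) := by
    rw [one_div, inv_rpow two_pos.le, ← rpow_neg two_pos.le, ← rpow_neg_one,
      ← rpow_add two_pos]
    ring_nf
  calc ∫ r in Ioi (0 : ℝ), r ^ s * exp (-r ^ 2 / 2)
      = ∫ r in Ioi (0 : ℝ), r ^ s * exp (-(1 / 2) * r ^ (2 : ℝ)) := by
        simp only [rpow_two]; ring_nf
    _ = 2 ^ ((s - 1) / 2) * Gamma ((s + 1) / 2) := by
        rw [integral_rpow_mul_exp_neg_mul_rpow two_pos hs (by norm_num), hhalf]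

theorem sphere_const_mul_gaussian_moment (a b : ℝ) :
    (2 * π ^ (a / 2) / Gamma (a / 2)) / (2 * π) ^ (a / 2) *
        (2 ^ ((a - b - 2) / 2) * Gamma ((a - b) / 2)) =
      2 ^ (-b / 2) * Gamma ((a - b) / 2) / Gamma (a / 2) := by
  have hpow : 2 * 2 ^ ((a - b - 2) / 2) / 2 ^ (a / 2) = (2 : ℝ) ^ (-b / 2) := by
    rw [mul_div_assoc, ← rpow_sub two_pos, mul_comm, ← rpow_add_one two_ne_zero]
    ring_nf
  have hπ : π ^ (a / 2) ≠ 0 := (rpow_pos_of_pos pi_pos _).ne'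
  calc _ = 2 * 2 ^ ((a - b - 2) / 2) / 2 ^ (a / 2) * (π ^ (a / 2) / π ^ (a / 2)) *
        Gamma ((a - b) / 2) / Gamma (a / 2) := by
        rw [mul_rpow two_pos.le pi_pos.le]; ring
    _ = _ := by rw [hpow, div_self hπ, mul_one]

theorem cone_cylinder_limit_general (N c : ℕ) (hcN : c < N)
    (g : ℝ → ℝ) (L : ℝ)
    (hmono : MonotoneOn g (Set.Ici 0))
    (hrange : ∀ t, 0 ≤ t → g t ∈ Set.Icc (0 : ℝ) 1)
    (hglim : Tendsto (fun ε => g ε / ε ^ c) (nhdsWithin 0 (Set.Ioi 0)) (nhds L)) :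
    Tendsto
      (fun ε =>
        ((2 * π ^ ((N : ℝ) / 2) / Real.Gamma ((N : ℝ) / 2)) / (2 * π) ^ ((N : ℝ) / 2) *
            ∫ r in Set.Ioi (0 : ℝ), g (ε / r) * r ^ (N - 1) * Real.exp (-r ^ 2 / 2)) /
          ε ^ c)
      (nhdsWithin 0 (Set.Ioi 0))
      (nhds ((2 : ℝ) ^ (-(c : ℝ) / 2) * Real.Gamma (((N : ℝ) - c) / 2) /
        Real.Gamma ((N : ℝ) / 2) * L)) := by
  set s : ℝ := N - 1 - c
  have hs : -1 < s := by
    have : (c : ℝ) + 1 ≤ N := by exact_mod_cast hcN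
    linarith
  obtain ⟨M, hM⟩ := exists_abs_div_pow_le_of_tendsto (B := 1)
    (fun t ht => abs_le.mpr ⟨by linarith [(hrange t ht.le).1], (hrange t ht.le).2⟩) hglim
  have hmeas (ε : ℝ) (hε : 0 < ε) :
      AEStronglyMeasurable (fun r => g (ε / r) / (ε / r) ^ c) (volume.restrict (Ioi 0)) :=
    ((hmono.aemeasurable_comp_div hε.le).div (by fun_prop)).aestronglyMeasurable
  have hv : IntegrableOn (fun r => r ^ s * exp (-r ^ 2 / 2)) (Ioi 0) :=
    (integrableOn_rpow_mul_exp_neg_mul_sq (by norm_num : (0 : ℝ) < 1 / 2) hs).congr_fun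
      (fun r _ => by ring_nf) measurableSet_Ioi
  have key := (tendsto_setIntegral_comp_div_mul hglim hM hmeas hv).const_mul
    ((2 * π ^ ((N : ℝ) / 2) / Real.Gamma ((N : ℝ) / 2)) / (2 * π) ^ ((N : ℝ) / 2))
  rw [integral_rpow_mul_exp_neg_sq_div_two hs, mul_left_comm,
    show (s - 1) / 2 = ((N : ℝ) - c - 2) / 2 by ring,
    show (s + 1) / 2 = ((N : ℝ) - c) / 2 by ring,
    sphere_const_mul_gaussian_moment, mul_comm L] at key
  refine key.congr' ?_
  filter_upwards [self_mem_nhdsWithin] with ε hε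
  rw [mul_div_assoc _ _ (ε ^ c), ← MeasureTheory.integral_div]
  congr 1
  refine setIntegral_congr_fun measurableSet_Ioi fun r (hr : 0 < r) => ?_
  have hpow : r ^ s = r ^ (N - 1) / r ^ c := by
    rw [show s = ((N - 1 : ℕ) : ℝ) - c by rw [Nat.cast_sub (by omega)]; ring, rpow_sub hr,
      rpow_natCast, rpow_natCast]
  have hε0 : ε ≠ 0 := (mem_Ioi.mp hε).ne'
  simp only [hpow, div_pow]
  field_simp

theorem cone_cylinder_limit (N c : ℕ) (hc : 0 < c) (hcN : c < N)
    (g : ℝ → ℝ) (L : ℝ)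
    (hmono : MonotoneOn g (Set.Ici 0))
    (hrange : ∀ t, 0 ≤ t → g t ∈ Set.Icc (0 : ℝ) 1)
    (hg0 : g 0 = 0)
    (hsmooth : ∃ δ > 0, ContDiffOn ℝ c g (Set.Ioo (-δ) δ))
    (hderiv0 : ∀ l < c, iteratedDeriv l g 0 = 0)
    (hbdd : ∀ l ≤ c, ∃ M : ℝ, ∀ t, 0 ≤ t → |iteratedDeriv l g t| ≤ M)
    (hginf : Tendsto g atTop (nhds 1))
    (hglim : Tendsto (fun ε => g ε / ε ^ c) (nhdsWithin 0 (Set.Ioi 0)) (nhds L)) :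
    Tendsto
      (fun ε =>
        ((2 * π ^ ((N : ℝ) / 2) / Real.Gamma ((N : ℝ) / 2)) / (2 * π) ^ ((N : ℝ) / 2) *
            ∫ r in Set.Ioi (0 : ℝ), g (ε / r) * r ^ (N - 1) * Real.exp (-r ^ 2 / 2)) /
          ε ^ c)
      (nhdsWithin 0 (Set.Ioi 0))
      (nhds ((2 : ℝ) ^ (-(c : ℝ) / 2) * Real.Gamma (((N : ℝ) - c) / 2) /
        Real.Gamma ((N : ℝ) / 2) * L)) :=
  cone_cylinder_limit_general N c hcN g L hmono hrange hglim
end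

section
/- The sequence a_n = ∏_{k=0}^{μ-1} (n+k)!·k!/((n-μ+k)!·(μ+k)!) satisfies a_n = Θ(n^{μ²}) as n → ∞, for each fixed μ ≥ 1; that is, there exist positive constants c, C such that c·n^{μ²} ≤ a_n ≤ C·n^{μ²} for all large n. -/
/-!
For `μ ≤ n` the `k`-th factor splits as `(n + k)! / (n + k - μ)! = (n + k).descFactorial μ`
times the constant `k! / (μ + k)!`. Each of the `μ` falling factorials is a product of `μ`
integers in `[n + 1 - μ, n + μ]`, hence lies between `(n / 2) ^ μ` and `(2 n) ^ μ` once
`n ≥ 2 μ`; multiplying the `μ` factors gives `a_n = Θ(n ^ (μ ^ 2))`.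
-/

open Finset Filter Nat

lemma Nat.cast_factorial_div_factorial_sub {F : Type*} [Field F] [CharZero F] {n k : ℕ}
    (h : k ≤ n) : (n ! : F) / (n - k)! = n.descFactorial k := by
  rw [div_eq_iff (Nat.cast_ne_zero.mpr (Nat.factorial_ne_zero _)),
    ← Nat.factorial_mul_descFactorial h]
  push_cast
  ring

lemma prod_factorial_ratio_eq {μ n : ℕ} (h : μ ≤ n) :
    ∏ k ∈ range μ, ((n + k)! * k ! : ℝ) / ((n - μ + k)! * (μ + k)!) =
      (∏ k ∈ range μ, (n + k).descFactorial μ : ℕ) * ∏ k ∈ range μ, (k ! : ℝ) / (μ + k)! := by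
  rw [Nat.cast_prod, ← prod_mul_distrib]
  refine prod_congr rfl fun k _ => ?_
  rw [show n - μ + k = n + k - μ by omega, mul_div_mul_comm,
    Nat.cast_factorial_div_factorial_sub (by omega)]

lemma pow_le_two_pow_mul_descFactorial_add {μ n : ℕ} (hn : 2 * μ ≤ n) (k : ℕ) :
    n ^ μ ≤ 2 ^ μ * (n + k).descFactorial μ :=
  calc n ^ μ ≤ (2 * (n + k + 1 - μ)) ^ μ := Nat.pow_le_pow_left (by omega) μ
    _ ≤ 2 ^ μ * (n + k).descFactorial μ := by
      rw [mul_pow]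
      exact Nat.mul_le_mul_left _ (Nat.pow_sub_le_descFactorial _ _)

lemma descFactorial_add_le_two_pow_mul_pow {μ n k : ℕ} (hk : k ≤ n) :
    (n + k).descFactorial μ ≤ 2 ^ μ * n ^ μ :=
  calc (n + k).descFactorial μ ≤ (n + k) ^ μ := Nat.descFactorial_le_pow _ _
    _ ≤ (2 * n) ^ μ := Nat.pow_le_pow_left (by omega) μ
    _ = 2 ^ μ * n ^ μ := mul_pow 2 n μ

lemma prod_const_pow_range (a μ : ℕ) : ∏ _k ∈ range μ, a ^ μ = a ^ (μ ^ 2) := by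
  rw [prod_const, card_range, ← pow_mul, sq]

lemma pow_sq_le_two_pow_sq_mul_prod_descFactorial {μ n : ℕ} (hn : 2 * μ ≤ n) :
    n ^ (μ ^ 2) ≤ 2 ^ (μ ^ 2) * ∏ k ∈ range μ, (n + k).descFactorial μ := by
  rw [← prod_const_pow_range n, ← prod_const_pow_range 2, ← prod_mul_distrib]
  exact prod_le_prod' fun k _ => pow_le_two_pow_mul_descFactorial_add hn k

lemma prod_descFactorial_le_two_pow_sq_mul_pow_sq {μ n : ℕ} (hn : μ ≤ n) :
    ∏ k ∈ range μ, (n + k).descFactorial μ ≤ 2 ^ (μ ^ 2) * n ^ (μ ^ 2) := by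
  rw [← prod_const_pow_range n, ← prod_const_pow_range 2, ← prod_mul_distrib]
  exact prod_le_prod' fun k hk =>
    descFactorial_add_le_two_pow_mul_pow ((mem_range.mp hk).le.trans hn)

theorem degree_theta_general (μ : ℕ) :
    ∃ c C : ℝ, 0 < c ∧ 0 < C ∧
      ∀ᶠ n : ℕ in atTop,
        c * (n : ℝ) ^ (μ ^ 2) ≤
            (∏ k ∈ Finset.range μ,
              ((n + k).factorial * k.factorial : ℝ) /
                ((n - μ + k).factorial * (μ + k).factorial)) ∧
          (∏ k ∈ Finset.range μ,
              ((n + k).factorial * k.factorial : ℝ) /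
                ((n - μ + k).factorial * (μ + k).factorial)) ≤
            C * (n : ℝ) ^ (μ ^ 2) := by
  set K : ℝ := ∏ k ∈ range μ, (k ! : ℝ) / (μ + k)!
  have hK : 0 < K := prod_pos fun k _ => by positivity
  refine ⟨K / 2 ^ (μ ^ 2), K * 2 ^ (μ ^ 2), by positivity, by positivity, ?_⟩
  filter_upwards [eventually_ge_atTop (2 * μ)] with n hn
  rw [prod_factorial_ratio_eq (by omega)]
  set D := ∏ k ∈ range μ, (n + k).descFactorial μ
  have hlow : (n : ℝ) ^ (μ ^ 2) ≤ 2 ^ (μ ^ 2) * D := by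
    exact_mod_cast pow_sq_le_two_pow_sq_mul_prod_descFactorial hn
  have hup : (D : ℝ) ≤ 2 ^ (μ ^ 2) * n ^ (μ ^ 2) := by
    exact_mod_cast prod_descFactorial_le_two_pow_sq_mul_pow_sq (by omega)
  constructor
  · rw [div_mul_eq_mul_div, div_le_iff₀ (by positivity)]
    nlinarith
  · nlinarith

theorem degree_theta (μ : ℕ) (hμ : 1 ≤ μ) :
    ∃ c C : ℝ, 0 < c ∧ 0 < C ∧
      ∀ᶠ n : ℕ in atTop,
        c * (n : ℝ) ^ (μ ^ 2) ≤
            (∏ k ∈ Finset.range μ,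
              ((n + k).factorial * k.factorial : ℝ) /
                ((n - μ + k).factorial * (μ + k).factorial)) ∧
          (∏ k ∈ Finset.range μ,
              ((n + k).factorial * k.factorial : ℝ) /
                ((n - μ + k).factorial * (μ + k).factorial)) ≤
            C * (n : ℝ) ^ (μ ^ 2) :=
  degree_theta_general μ
end

section
/- Let n, μ ≥ 1 with n - μ = 2m + 1 odd and μ fixed. Then C(n,μ) · (∏_{i=0}^{m-1} Γ(i+μ+3/2)/Γ(i+3/2)) / (∏_{k=n-μ+1}^{n} Γ(1+k/2)) = Θ(n^{μ(μ+1)/4}) as n → ∞ along integers with n - μ odd. -/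
open Finset Filter Real

/-!
Put n = μ + 2m + 1 and x = m + 3/2. Telescoping the first product and reindexing the second turns
the quantity into C(n, μ) · ∏_{j<μ} Γ(x + j) / Γ(x + (j + 1)/2), up to the constant factor
∏_{j<μ} Γ(j + 3/2). Log-convexity of Γ gives √x / √2 ≤ Γ(x + 1/2) / Γ(x) ≤ √x, hence
Γ(x + p/2) / Γ(x + q/2) = Θ(x^((p - q)/2)). The exponents (j - 1)/2 sum to μ(μ - 3)/4, and with
C(n, μ) = Θ(n^μ) and x = Θ(n) the whole is Θ(n^(μ + μ(μ - 3)/4)) = Θ(n^(μ(μ + 1)/4)).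
-/

open Asymptotics

theorem Asymptotics.IsTheta.comp_tendsto {α β E F : Type*} [Norm E] [Norm F] {l : Filter α}
    {f : α → E} {g : α → F} (h : f =Θ[l] g) {k : β → α} {l' : Filter β} (hk : Tendsto k l' l) :
    (f ∘ k) =Θ[l'] (g ∘ k) :=
  ⟨h.1.comp_tendsto hk, h.2.comp_tendsto hk⟩

theorem isTheta_iff_exists_pos_bounds {α : Type*} {l : Filter α} {f g : α → ℝ}
    (hf : 0 ≤ᶠ[l] f) (hg : 0 ≤ᶠ[l] g) :
    f =Θ[l] g ↔ ∃ c C : ℝ, 0 < c ∧ 0 < C ∧ ∀ᶠ x in l, c * g x ≤ f x ∧ f x ≤ C * g x := by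
  constructor
  · rintro ⟨hfg, hgf⟩
    obtain ⟨C, hC, hfg⟩ := hfg.exists_pos
    obtain ⟨C', hC', hgf⟩ := hgf.exists_pos
    refine ⟨C'⁻¹, C, inv_pos.2 hC', hC, ?_⟩
    filter_upwards [hfg.bound, hgf.bound, hf, hg] with x hfgx hgfx hfx hgx
    rw [Real.norm_of_nonneg hfx, Real.norm_of_nonneg hgx] at hfgx hgfx
    exact ⟨by rwa [inv_mul_le_iff₀ hC'], hfgx⟩
  · rintro ⟨c, C, hc, -, hbounds⟩
    refine ⟨.of_bound C ?_, .of_bound c⁻¹ ?_⟩ <;>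
      filter_upwards [hbounds, hf, hg] with x hx hfx hgx <;>
      rw [Real.norm_of_nonneg hfx, Real.norm_of_nonneg hgx]
    · exact hx.2
    · rw [le_inv_mul_iff₀ hc]; exact hx.1

theorem isTheta_rpow_add_const (c r : ℝ) :
    (fun x : ℝ => (x + c) ^ r) =Θ[atTop] fun x => x ^ r := by
  have h : (fun x : ℝ => x + c) =Θ[atTop] id :=
    isTheta_rfl.add_isLittleO (isLittleO_const_id_atTop c)
  exact h.rpow (eventually_ge_atTop (-c) |>.mono fun x hx => show (0 : ℝ) ≤ x + c by linarith)
    (eventually_ge_atTop 0)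

namespace Real

theorem Gamma_add_half_le_sqrt_mul_Gamma {x : ℝ} (hx : 0 < x) :
    Gamma (x + 1 / 2) ≤ √x * Gamma x := by
  have hΓ := Gamma_pos_of_pos hx
  have h := Gamma_mul_add_mul_le_rpow_Gamma_mul_rpow_Gamma hx (by linarith : 0 < x + 1)
    one_half_pos one_half_pos (by norm_num)
  rw [show 1 / 2 * x + 1 / 2 * (x + 1) = x + 1 / 2 by ring, Gamma_add_one hx.ne',
    ← sqrt_eq_rpow, ← sqrt_eq_rpow, sqrt_mul hx.le, mul_left_comm, mul_self_sqrt hΓ.le] at h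
  linarith

theorem mul_Gamma_le_sqrt_mul_Gamma_add_half {x : ℝ} (hx : 0 < x) :
    x * Gamma x ≤ √(x + 1 / 2) * Gamma (x + 1 / 2) := by
  have h := Gamma_add_half_le_sqrt_mul_Gamma (by linarith : 0 < x + 1 / 2)
  rwa [add_assoc, add_halves, Gamma_add_one hx.ne'] at h

theorem isTheta_Gamma_add_half_div_Gamma :
    (fun x => Gamma (x + 1 / 2) / Gamma x) =Θ[atTop] fun x => x ^ (1 / 2 : ℝ) := by
  refine (isTheta_iff_exists_pos_bounds ?_ ?_).2 ⟨(√2)⁻¹, 1, by positivity, one_pos, ?_⟩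
  · filter_upwards [eventually_gt_atTop 0] with x hx
    exact (div_pos (Gamma_pos_of_pos (by linarith)) (Gamma_pos_of_pos hx)).le
  · filter_upwards [eventually_ge_atTop 0] with x hx using rpow_nonneg hx _
  filter_upwards [eventually_ge_atTop (1 / 2)] with x hx
  have hx0 : 0 < x := by linarith
  have hΓ := Gamma_pos_of_pos hx0
  rw [← sqrt_eq_rpow, le_div_iff₀ hΓ, div_le_iff₀ hΓ, one_mul]
  refine ⟨?_, Gamma_add_half_le_sqrt_mul_Gamma hx0⟩
  have hsq : √(x + 1 / 2) ≤ √2 * √x := by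
    rw [← sqrt_mul zero_le_two]; exact sqrt_le_sqrt (by linarith)
  rw [inv_mul_eq_div, div_mul_eq_mul_div, div_le_iff₀ (by positivity)]
  refine le_of_mul_le_mul_left ?_ (sqrt_pos.2 hx0)
  calc √x * (√x * Gamma x) = x * Gamma x := by rw [← mul_assoc, mul_self_sqrt hx0.le]
    _ ≤ √(x + 1 / 2) * Gamma (x + 1 / 2) := mul_Gamma_le_sqrt_mul_Gamma_add_half hx0
    _ ≤ √2 * √x * Gamma (x + 1 / 2) := by gcongr
    _ = √x * (Gamma (x + 1 / 2) * √2) := by ring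

theorem isTheta_Gamma_add_half_nat_div_Gamma (j : ℕ) :
    (fun x => Gamma (x + j / 2) / Gamma x) =Θ[atTop] fun x => x ^ ((j : ℝ) / 2) := by
  induction j with
  | zero =>
    refine EventuallyEq.isTheta ?_
    filter_upwards [eventually_gt_atTop 0] with x hx
    simp [(Gamma_pos_of_pos hx).ne']
  | succ j ih =>
    have hshift : (fun x => Gamma (x + j / 2 + 1 / 2) / Gamma (x + j / 2)) =Θ[atTop]
        fun x => x ^ (1 / 2 : ℝ) :=
      (isTheta_Gamma_add_half_div_Gamma.comp_tendsto
        (tendsto_atTop_add_const_right _ _ tendsto_id)).trans (isTheta_rpow_add_const _ _)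
    refine EventuallyEq.trans_isTheta ?_ ((hshift.mul ih).trans_eventuallyEq ?_)
    · filter_upwards [eventually_gt_atTop 0] with x hx
      have : 0 < Gamma (x + j / 2) := Gamma_pos_of_pos (by positivity)
      push_cast
      rw [div_mul_div_cancel₀ this.ne', add_assoc, ← add_div]
    · filter_upwards [eventually_gt_atTop 0] with x hx
      rw [← rpow_add hx]; push_cast; ring_nf

theorem isTheta_Gamma_add_half_nat_div_Gamma_add_half_nat (p q : ℕ) :
    (fun x => Gamma (x + p / 2) / Gamma (x + q / 2)) =Θ[atTop]
      fun x => x ^ (((p : ℝ) - q) / 2) := by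
  refine EventuallyEq.trans_isTheta ?_ (((isTheta_Gamma_add_half_nat_div_Gamma p).div
    (isTheta_Gamma_add_half_nat_div_Gamma q)).trans_eventuallyEq ?_)
  · filter_upwards [eventually_gt_atTop 0] with x hx
    rw [div_div_div_cancel_right₀ (Gamma_pos_of_pos hx).ne']
  · filter_upwards [eventually_gt_atTop 0] with x hx
    rw [← rpow_sub hx, sub_div]

end Real

noncomputable def symVolumeFactor (μ n m : ℕ) : ℝ :=
  (n.choose μ : ℝ) *
    (∏ i ∈ range m, Gamma ((i : ℝ) + μ + 3 / 2) / Gamma ((i : ℝ) + 3 / 2)) /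
    ∏ k ∈ Icc (n - μ + 1) n, Gamma (1 + (k : ℝ) / 2)

theorem prod_range_Gamma_add_div_Gamma (μ m : ℕ) :
    ∏ i ∈ range m, Gamma ((i : ℝ) + μ + 3 / 2) / Gamma ((i : ℝ) + 3 / 2) =
      (∏ j ∈ range μ, Gamma ((m : ℝ) + 3 / 2 + j)) / ∏ j ∈ range μ, Gamma ((j : ℝ) + 3 / 2) := by
  have hpos : ∀ s : Finset ℕ, 0 < ∏ i ∈ s, Gamma ((i : ℝ) + 3 / 2) := fun s =>
    prod_pos fun i _ => Gamma_pos_of_pos (by positivity)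
  rw [prod_div_distrib, div_eq_div_iff (hpos _).ne' (hpos _).ne']
  have key := prod_range_add (fun i : ℕ => Gamma ((i : ℝ) + 3 / 2)) μ m
  rw [add_comm, prod_range_add] at key
  push_cast at key
  convert key.symm using 1 <;> rw [mul_comm] <;> congr 1 <;>
    exact prod_congr rfl fun i _ => by ring_nf

theorem prod_Icc_Gamma_one_add_half (μ m : ℕ) :
    ∏ k ∈ Icc (μ + 2 * m + 1 - μ + 1) (μ + 2 * m + 1), Gamma (1 + (k : ℝ) / 2) =
      ∏ j ∈ range μ, Gamma ((m : ℝ) + 3 / 2 + ((j + 1 : ℕ) : ℝ) / 2) := by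
  rw [show μ + 2 * m + 1 - μ + 1 = 2 * m + 2 by omega, ← Ico_add_one_right_eq_Icc,
    prod_Ico_eq_prod_range, show μ + 2 * m + 1 + 1 - (2 * m + 2) = μ by omega]
  exact prod_congr rfl fun j _ => by push_cast; ring_nf

theorem symVolumeFactor_eq (μ m : ℕ) :
    symVolumeFactor μ (μ + 2 * m + 1) m =
      (∏ j ∈ range μ, Gamma ((j : ℝ) + 3 / 2))⁻¹ *
        (((μ + 2 * m + 1).choose μ : ℝ) *
          ∏ j ∈ range μ, Gamma ((m : ℝ) + 3 / 2 + ((2 * j : ℕ) : ℝ) / 2) /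
            Gamma ((m : ℝ) + 3 / 2 + ((j + 1 : ℕ) : ℝ) / 2)) := by
  rw [symVolumeFactor, prod_range_Gamma_add_div_Gamma, prod_Icc_Gamma_one_add_half,
    prod_div_distrib]
  push_cast
  ring_nf

theorem sum_range_two_mul_sub_succ_div_two (μ : ℕ) :
    ∑ j ∈ range μ, ((2 * j : ℕ) - (j + 1 : ℕ) : ℝ) / 2 = μ * (μ - 3) / 4 := by
  induction μ with
  | zero => simp
  | succ μ ih => rw [sum_range_succ, ih]; push_cast; ring

theorem isTheta_symVolumeFactor (μ : ℕ) :
    (fun m => symVolumeFactor μ (μ + 2 * m + 1) m) =Θ[atTop]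
      fun m => ((μ + 2 * m + 1 : ℕ) : ℝ) ^ (((μ * (μ + 1) : ℕ) : ℝ) / 4) := by
  have hn : Tendsto (fun m : ℕ => μ + 2 * m + 1) atTop atTop :=
    tendsto_atTop_mono (fun m => show m ≤ μ + 2 * m + 1 by omega) tendsto_id
  have hx : Tendsto (fun m : ℕ => (m : ℝ) + 3 / 2) atTop atTop :=
    tendsto_atTop_add_const_right _ _ tendsto_natCast_atTop_atTop
  have hchoose := (isTheta_choose μ).comp_tendsto hn
  have hratio : (fun m : ℕ => ∏ j ∈ range μ, Gamma ((m : ℝ) + 3 / 2 + ((2 * j : ℕ) : ℝ) / 2) /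
      Gamma ((m : ℝ) + 3 / 2 + ((j + 1 : ℕ) : ℝ) / 2)) =Θ[atTop]
      fun m => ((m : ℝ) + 3 / 2) ^ ((μ : ℝ) * (μ - 3) / 4) := by
    refine (IsTheta.finsetProd fun j _ => (isTheta_Gamma_add_half_nat_div_Gamma_add_half_nat
      (2 * j) (j + 1)).comp_tendsto hx).trans_eventuallyEq (.of_forall fun m => ?_)
    simp only [Function.comp_apply]
    rw [← rpow_sum_of_pos (by positivity), sum_range_two_mul_sub_succ_div_two]
  have hbase : (fun m : ℕ => (m : ℝ) + 3 / 2) =Θ[atTop] fun m => ((μ + 2 * m + 1 : ℕ) : ℝ) := by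
    refine (isTheta_iff_exists_pos_bounds (.of_forall fun m => by positivity)
      (.of_forall fun m => by positivity)).2 ⟨1 / 3, 2, by norm_num, two_pos, ?_⟩
    filter_upwards [eventually_ge_atTop μ] with m hm
    have : (μ : ℝ) ≤ m := by exact_mod_cast hm
    push_cast
    constructor <;> linarith
  have hpow := hbase.rpow (.of_forall fun m => by positivity) (.of_forall fun m => by positivity)
    (r := (μ : ℝ) * (μ - 3) / 4)
  simp_rw [symVolumeFactor_eq]
  refine (isTheta_const_mul_left (inv_ne_zero (prod_pos fun j _ =>
    Gamma_pos_of_pos (by positivity)).ne')).2 ?_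
  refine (hchoose.mul (hratio.trans hpow)).trans_eventuallyEq (.of_forall fun m => ?_)
  simp only [Function.comp_apply]
  rw [← rpow_natCast, ← rpow_add (by positivity)]
  push_cast
  ring_nf

theorem sym_volume_theta_general (μ : ℕ) :
    ∃ c C : ℝ, 0 < c ∧ 0 < C ∧
      ∀ᶠ m : ℕ in atTop,
        ∀ n : ℕ, n = μ + 2 * m + 1 →
          c * (n : ℝ) ^ (((μ * (μ + 1) : ℕ) : ℝ) / 4) ≤
              (n.choose μ : ℝ) *
                (∏ i ∈ Finset.range m,
                  Real.Gamma ((i : ℝ) + μ + 3 / 2) / Real.Gamma ((i : ℝ) + 3 / 2)) /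
                (∏ k ∈ Finset.Icc (n - μ + 1) n, Real.Gamma (1 + (k : ℝ) / 2)) ∧
            (n.choose μ : ℝ) *
                (∏ i ∈ Finset.range m,
                  Real.Gamma ((i : ℝ) + μ + 3 / 2) / Real.Gamma ((i : ℝ) + 3 / 2)) /
                (∏ k ∈ Finset.Icc (n - μ + 1) n, Real.Gamma (1 + (k : ℝ) / 2)) ≤
              C * (n : ℝ) ^ (((μ * (μ + 1) : ℕ) : ℝ) / 4) := by
  have hpos : ∀ m, 0 ≤ symVolumeFactor μ (μ + 2 * m + 1) m := fun m => by
    unfold symVolumeFactor; positivity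
  obtain ⟨c, C, hc, hC, hbounds⟩ := (isTheta_iff_exists_pos_bounds (.of_forall hpos)
    (.of_forall fun m => by positivity)).1 (isTheta_symVolumeFactor μ)
  exact ⟨c, C, hc, hC, hbounds.mono fun m hm n hn => hn ▸ hm⟩

theorem sym_volume_theta (μ : ℕ) (hμ : 1 ≤ μ) :
    ∃ c C : ℝ, 0 < c ∧ 0 < C ∧
      ∀ᶠ m : ℕ in atTop,
        ∀ n : ℕ, n = μ + 2 * m + 1 →
          c * (n : ℝ) ^ (((μ * (μ + 1) : ℕ) : ℝ) / 4) ≤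
              (n.choose μ : ℝ) *
                (∏ i ∈ Finset.range m,
                  Real.Gamma ((i : ℝ) + μ + 3 / 2) / Real.Gamma ((i : ℝ) + 3 / 2)) /
                (∏ k ∈ Finset.Icc (n - μ + 1) n, Real.Gamma (1 + (k : ℝ) / 2)) ∧
            (n.choose μ : ℝ) *
                (∏ i ∈ Finset.range m,
                  Real.Gamma ((i : ℝ) + μ + 3 / 2) / Real.Gamma ((i : ℝ) + 3 / 2)) /
                (∏ k ∈ Finset.Icc (n - μ + 1) n, Real.Gamma (1 + (k : ℝ) / 2)) ≤
              C * (n : ℝ) ^ (((μ * (μ + 1) : ℕ) : ℝ) / 4) :=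
  sym_volume_theta_general μ
end

section
/- For a nonsingular real symmetric n×n matrix Q with eigenvalues λ_1(Q), …, λ_n(Q), the Frobenius distance from Q to the set Z^μ of symmetric matrices of corank at least μ equals the square root of the sum of the squares of the μ smallest (in absolute value) eigenvalues of Q. -/
/-!
For the lower bound, let `X` have rank at most `n - μ`. Its kernel contains an orthonormal family
`v₁, …, v_μ`, and with `uᵢ` an orthonormal eigenbasis of `Q`,
`‖Q - X‖² ≥ ∑ₖ ‖(Q - X) vₖ‖² = ∑ₖ ‖Q vₖ‖² = ∑ᵢ λᵢ² tᵢ` where `tᵢ = ∑ₖ ⟪uᵢ, vₖ⟫²`.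
By Bessel and Parseval the weights `tᵢ` lie in `[0, 1]` and sum to `μ`, and such a weighted sum of
the `λᵢ²` is at least the sum of the `μ` smallest ones. The bound is attained by deleting the
eigenvalues indexed by `s` from the spectral decomposition of `Q`.
-/

open Finset Matrix

open scoped RealInnerProductSpace

theorem sum_le_sum_mul_of_card_le_sum {ι : Type*} [Fintype ι] (s : Finset ι) {a t : ι → ℝ}
    (ha : ∀ i, 0 ≤ a i) (has : ∀ i ∈ s, ∀ j ∉ s, a i ≤ a j)
    (ht₀ : ∀ i, 0 ≤ t i) (ht₁ : ∀ i, t i ≤ 1) (hst : (#s : ℝ) ≤ ∑ i, t i) :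
    ∑ i ∈ s, a i ≤ ∑ i, a i * t i := by
  classical
  obtain ⟨M, hM₀, hsM, hMs⟩ : ∃ M, 0 ≤ M ∧ (∀ i ∈ s, a i ≤ M) ∧ ∀ j ∉ s, M ≤ a j := by
    rcases s.eq_empty_or_nonempty with rfl | hs
    · exact ⟨0, le_rfl, by simp, fun j _ => ha j⟩
    · obtain ⟨i, hi⟩ := hs
      exact ⟨s.sup' ⟨i, hi⟩ a, (ha i).trans (s.le_sup' a hi), fun i hi => s.le_sup' a hi,
        fun j hj => s.sup'_le _ a fun i hi => has i hi j hj⟩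
  have hcompl : (#s : ℝ) - ∑ i ∈ s, t i ≤ ∑ i ∈ sᶜ, t i := by
    rw [← sum_add_sum_compl s t] at hst; linarith
  calc ∑ i ∈ s, a i = ∑ i ∈ s, a i * t i + ∑ i ∈ s, a i * (1 - t i) := by
        rw [← sum_add_distrib]; exact sum_congr rfl fun i _ => by ring
    _ ≤ ∑ i ∈ s, a i * t i + ∑ i ∈ s, M * (1 - t i) := by
        gcongr with i hi
        · exact sub_nonneg.2 (ht₁ i)
        · exact hsM i hi
    _ = ∑ i ∈ s, a i * t i + M * (#s - ∑ i ∈ s, t i) := by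
        rw [← mul_sum, sum_sub_distrib, sum_const, nsmul_one]
    _ ≤ ∑ i ∈ s, a i * t i + ∑ i ∈ sᶜ, M * t i := by
        rw [← mul_sum]; gcongr
    _ ≤ ∑ i ∈ s, a i * t i + ∑ i ∈ sᶜ, a i * t i := by
        gcongr with i hi
        · exact ht₀ i
        · exact hMs i (mem_compl.1 hi)
    _ = ∑ i, a i * t i := sum_add_sum_compl s _

theorem Submodule.exists_orthonormal_of_le_finrank {E : Type*} [NormedAddCommGroup E]
    [InnerProductSpace ℝ E] [FiniteDimensional ℝ E] (K : Submodule ℝ E) {μ : ℕ}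
    (hμ : μ ≤ Module.finrank ℝ K) :
    ∃ v : Fin μ → E, Orthonormal ℝ v ∧ ∀ k, v k ∈ K := by
  let b := stdOrthonormalBasis ℝ K
  refine ⟨fun k => b (Fin.castLE hμ k), ?_, fun k => (b _).2⟩
  exact (b.orthonormal.comp _ (Fin.castLE_injective hμ)).comp_linearIsometry K.subtypeₗᵢ

theorem Matrix.finrank_ker_toEuclideanLin {m n : Type*} [Fintype m] [Fintype n]
    [DecidableEq n] (X : Matrix m n ℝ) :
    Module.finrank ℝ (LinearMap.ker (toEuclideanLin X)) = Fintype.card n - X.rank := by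
  have hrank : X.rank = Module.finrank ℝ (LinearMap.range (toEuclideanLin X)) :=
    X.rank_eq_finrank_range_toLin (PiLp.basisFun 2 ℝ m) (PiLp.basisFun 2 ℝ n)
  have h := LinearMap.finrank_range_add_finrank_ker (toEuclideanLin X)
  rw [finrank_euclideanSpace, ← hrank] at h
  omega

theorem Matrix.sum_norm_toEuclideanLin_sq_le {m n κ : Type*} [Fintype m] [Fintype n]
    [DecidableEq n] [Fintype κ] (A : Matrix m n ℝ) {v : κ → EuclideanSpace ℝ n}
    (hv : Orthonormal ℝ v) :
    ∑ k, ‖toEuclideanLin A (v k)‖ ^ 2 ≤ ∑ i, ∑ j, A i j ^ 2 := by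
  have hrow : ∀ k i, toEuclideanLin A (v k) i = ⟪v k, WithLp.toLp 2 (A i)⟫ := fun k i => by
    simp only [toLpLin_apply, mulVec, EuclideanSpace.inner_eq_star_dotProduct, star_trivial]
  calc ∑ k, ‖toEuclideanLin A (v k)‖ ^ 2 = ∑ i, ∑ k, ‖⟪v k, WithLp.toLp 2 (A i)⟫‖ ^ 2 := by
        simp_rw [EuclideanSpace.real_norm_sq_eq, hrow, Real.norm_eq_abs, sq_abs]
        exact sum_comm
    _ ≤ ∑ i, ‖WithLp.toLp 2 (A i)‖ ^ 2 := sum_le_sum fun i _ => hv.sum_inner_products_le _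
    _ = ∑ i, ∑ j, A i j ^ 2 := by simp_rw [EuclideanSpace.real_norm_sq_eq]

theorem Matrix.IsHermitian.norm_toEuclideanLin_sq {n : Type*} [Fintype n] [DecidableEq n]
    {Q : Matrix n n ℝ} (hQ : Q.IsHermitian) (x : EuclideanSpace ℝ n) :
    ‖toEuclideanLin Q x‖ ^ 2 =
      ∑ i, hQ.eigenvalues i ^ 2 * ⟪hQ.eigenvectorBasis i, x⟫ ^ 2 := by
  have hsymm := isSymmetric_toEuclideanLin_iff.mpr hQ
  have heig : ∀ i, toEuclideanLin Q (hQ.eigenvectorBasis i) =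
      hQ.eigenvalues i • hQ.eigenvectorBasis i := fun i => by
    rw [toLpLin_apply, hQ.mulVec_eigenvectorBasis]; rfl
  rw [← hQ.eigenvectorBasis.sum_sq_inner_right]
  refine sum_congr rfl fun i _ => ?_
  rw [← hsymm, heig, real_inner_smul_left]
  ring

theorem Matrix.IsHermitian.sum_sq_eigenvalues_le_sum_sq_sub {n : Type*} [Fintype n]
    [DecidableEq n] {Q : Matrix n n ℝ} (hQ : Q.IsHermitian) (s : Finset n)
    (hs : ∀ i ∈ s, ∀ j ∉ s, |hQ.eigenvalues i| ≤ |hQ.eigenvalues j|)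
    (X : Matrix n n ℝ) (hX : X.rank ≤ Fintype.card n - #s) :
    ∑ i ∈ s, hQ.eigenvalues i ^ 2 ≤ ∑ i, ∑ j, (Q i j - X i j) ^ 2 := by
  set u := hQ.eigenvectorBasis
  obtain ⟨v, hv, hvX⟩ := (LinearMap.ker (toEuclideanLin X)).exists_orthonormal_of_le_finrank
    (μ := #s) (by rw [X.finrank_ker_toEuclideanLin]; have := s.card_le_univ; omega)
  set t : n → ℝ := fun i => ∑ k, ⟪v k, u i⟫ ^ 2
  have ht₁ : ∀ i, t i ≤ 1 := fun i => by
    simpa [t, u.orthonormal.1 i] using hv.sum_inner_products_le (s := univ) (u i)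
  have hst : ∑ i, t i = #s := by
    rw [sum_comm]
    simp [u.sum_sq_inner_left, hv.1]
  calc ∑ i ∈ s, hQ.eigenvalues i ^ 2 ≤ ∑ i, hQ.eigenvalues i ^ 2 * t i :=
        sum_le_sum_mul_of_card_le_sum s (fun i => sq_nonneg _)
          (fun i hi j hj => sq_le_sq.2 (hs i hi j hj))
          (fun i => sum_nonneg fun k _ => sq_nonneg _) ht₁ hst.ge
    _ = ∑ k, ‖toEuclideanLin Q (v k)‖ ^ 2 := by
        simp_rw [hQ.norm_toEuclideanLin_sq, t, mul_sum, real_inner_comm (v _)]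
        exact sum_comm
    _ = ∑ k, ‖toEuclideanLin (Q - X) (v k)‖ ^ 2 := by
        simp_rw [map_sub, LinearMap.sub_apply, LinearMap.mem_ker.1 (hvX _), sub_zero]
    _ ≤ ∑ i, ∑ j, (Q i j - X i j) ^ 2 := (Q - X).sum_norm_toEuclideanLin_sq_le hv

theorem Matrix.sum_sq_eq_trace_transpose_mul {m n : Type*} [Fintype m] [Fintype n]
    (A : Matrix m n ℝ) : ∑ i, ∑ j, A i j ^ 2 = trace (Aᵀ * A) := by
  simp only [trace, diag_apply, mul_apply, transpose_apply, sq]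
  exact sum_comm

theorem Matrix.sum_sq_unitary_mul_mul_star {n : Type*} [Fintype n] [DecidableEq n]
    {U : Matrix n n ℝ} (hU : U ∈ unitaryGroup n ℝ) (A : Matrix n n ℝ) :
    ∑ i, ∑ j, (U * A * star U) i j ^ 2 = ∑ i, ∑ j, A i j ^ 2 := by
  have hUU : Uᵀ * U = 1 := by simpa [star_eq_conjTranspose] using mem_unitaryGroup_iff'.1 hU
  simp only [sum_sq_eq_trace_transpose_mul, star_eq_conjTranspose,
    conjTranspose_eq_transpose_of_trivial, transpose_mul, transpose_transpose]
  calc _ = trace (U * (Aᵀ * (Uᵀ * U) * A) * Uᵀ) := by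
        simp only [Matrix.mul_assoc]
    _ = trace (Aᵀ * A) := by
        rw [hUU, Matrix.mul_one, trace_mul_cycle, hUU, Matrix.one_mul]

theorem Matrix.rank_unitary_mul_mul_star {n α : Type*} [Fintype n] [DecidableEq n]
    [CommRing α] [StarRing α] {U : Matrix n n α} (hU : U ∈ unitaryGroup n α)
    (A : Matrix n n α) : (U * A * star U).rank = A.rank := by
  rw [Matrix.mul_assoc, rank_mul_eq_right_of_isUnit_det _ _ (UnitaryGroup.det_isUnit ⟨U, hU⟩),
    rank_mul_eq_left_of_isUnit_det _ _ (UnitaryGroup.det_isUnit ⟨star U, Unitary.star_mem hU⟩)]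

theorem Matrix.IsHermitian.exists_isHermitian_rank_le_sum_sq_sub_eq {n : Type*} [Fintype n]
    [DecidableEq n] {Q : Matrix n n ℝ} (hQ : Q.IsHermitian) (s : Finset n) :
    ∃ X : Matrix n n ℝ, X.IsHermitian ∧ X.rank ≤ Fintype.card n - #s ∧
      ∑ i, ∑ j, (Q i j - X i j) ^ 2 = ∑ i ∈ s, hQ.eigenvalues i ^ 2 := by
  set U := (hQ.eigenvectorUnitary : Matrix n n ℝ)
  set lam := hQ.eigenvalues
  have hQU : Q = U * diagonal lam * star U := by
    simpa [Unitary.conjStarAlgAut_apply] using hQ.spectral_theorem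
  set d : n → ℝ := fun i => if i ∈ s then 0 else lam i
  refine ⟨U * diagonal d * star U, ?_, ?_, ?_⟩
  · rw [star_eq_conjTranspose]
    exact isHermitian_mul_mul_conjTranspose U (isHermitian_diagonal d)
  · rw [rank_unitary_mul_mul_star hQ.eigenvectorUnitary.2, rank_diagonal, Fintype.card_subtype,
      ← card_compl]
    exact card_le_card fun i => by simp +contextual [d]
  · have hsub : Q - U * diagonal d * star U =
        U * diagonal (fun i => if i ∈ s then lam i else 0) * star U := by
      rw [hQU, ← Matrix.sub_mul, ← Matrix.mul_sub, diagonal_sub]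
      congr; ext i; by_cases hi : i ∈ s <;> simp [d, hi]
    change ∑ i, ∑ j, (Q - U * diagonal d * star U) i j ^ 2 = _
    rw [hsub, sum_sq_unitary_mul_mul_star hQ.eigenvectorUnitary.2]
    simp [diagonal_apply]

theorem eckart_young_symmetric_general (n μ : ℕ)
    (Q : Matrix (Fin n) (Fin n) ℝ) (hQ : Q.IsHermitian)
    (s : Finset (Fin n)) (hs : s.card = μ)
    (hmin : ∀ i ∈ s, ∀ j ∉ s, |hQ.eigenvalues i| ≤ |hQ.eigenvalues j|) :
    sInf {d : ℝ | ∃ X : Matrix (Fin n) (Fin n) ℝ, X.IsHermitian ∧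
        X.rank ≤ n - μ ∧ d = Real.sqrt (∑ i, ∑ j, (Q i j - X i j) ^ 2)} =
      Real.sqrt (∑ i ∈ s, hQ.eigenvalues i ^ 2) := by
  subst hs
  refine IsLeast.csInf_eq ⟨?_, ?_⟩
  · obtain ⟨X, hX, hXrank, hXQ⟩ := hQ.exists_isHermitian_rank_le_sum_sq_sub_eq s
    exact ⟨X, hX, by simpa using hXrank, by rw [hXQ]⟩
  · rintro _ ⟨X, -, hXrank, rfl⟩
    exact Real.sqrt_le_sqrt <|
      hQ.sum_sq_eigenvalues_le_sum_sq_sub s hmin X (by simpa using hXrank)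

/-- Frobenius distance from a nonsingular real symmetric matrix `Q` to the set of
symmetric matrices of corank at least `μ` equals the square root of the sum of the
squares of the `μ` smallest (in absolute value) eigenvalues of `Q`. -/
theorem eckart_young_symmetric (n μ : ℕ) (hμ : 1 ≤ μ) (hμn : μ ≤ n)
    (Q : Matrix (Fin n) (Fin n) ℝ) (hQ : Q.IsHermitian) (hdet : Q.det ≠ 0)
    (s : Finset (Fin n)) (hs : s.card = μ)
    (hmin : ∀ i ∈ s, ∀ j ∉ s, |hQ.eigenvalues i| ≤ |hQ.eigenvalues j|) :
    sInf {d : ℝ | ∃ X : Matrix (Fin n) (Fin n) ℝ, X.IsHermitian ∧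
        X.rank ≤ n - μ ∧ d = Real.sqrt (∑ i, ∑ j, (Q i j - X i j) ^ 2)} =
      Real.sqrt (∑ i ∈ s, hQ.eigenvalues i ^ 2) :=
  eckart_young_symmetric_general n μ Q hQ s hs hmin
end
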